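/- arXiv:1302.4285 — 4 statements merged into one kernel-verified Lean document; each statement's English description precedes it below -/
import Mathlib

section
/- Let p, q, r, u be integers with p, q, r, u ≥ 2, p even and r odd. Then the lattice sum S = ∑ 1/(m^p · n^q · (m+n)^q · (m+2n)^r · (m+3n)^u · (2m+3n)^u), taken over all pairs (m, n) with n ≥ 1 an integer and m a nonzero integer such that m+n ≠ 0, m+2n ≠ 0, m+3n ≠ 0 and 2m+3n ≠ 0, converges and equals 2·ζ₂(p,q,q,r,u,u; G₂). -/
/-!
The summand is bounded by `1/(m² n²)`, which gives absolute convergence. The index set splits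
according to the sign of `m + n`. Where `m + n < 0`, the Weyl reflection `(m, n) ↦ (m, -(m+n))`
is an involution of the index set which, `r` being odd, changes the sign of the summand, so
that part sums to zero. Where `m + n > 0`, the index set is the positive quadrant together with
its image under the Weyl reflection `(m, n) ↦ (-m, m+n)`, which preserves the summand since `p`
is even; each of the two pieces contributes `ζ₂(p,q,q,r,u,u; G₂)`.
-/

/-- The zeta-function of the root system `G₂` at a tuple of natural number exponents:
`ζ₂(s₁,…,s₆;G₂) = ∑_{m,n≥1} 1/(m^{s₁} n^{s₂} (m+n)^{s₃} (m+2n)^{s₄} (m+3n)^{s₅} (2m+3n)^{s₆})`. -/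
noncomputable def zetaG2 (s₁ s₂ s₃ s₄ s₅ s₆ : ℕ) : ℝ :=
  ∑' (m : ℕ+) (n : ℕ+),
    1 / (((m : ℕ) : ℝ) ^ s₁ * ((n : ℕ) : ℝ) ^ s₂ * (((m : ℕ) : ℝ) + ((n : ℕ) : ℝ)) ^ s₃ *
      (((m : ℕ) : ℝ) + 2 * ((n : ℕ) : ℝ)) ^ s₄ * (((m : ℕ) : ℝ) + 3 * ((n : ℕ) : ℝ)) ^ s₅ *
      (2 * ((m : ℕ) : ℝ) + 3 * ((n : ℕ) : ℝ)) ^ s₆)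


/-- The summand of the `G₂` lattice sum at a lattice point `(m,n) ∈ ℤ²`,
with exponents `(a,b,c,d,e,f)` on `m, n, m+n, m+2n, m+3n, 2m+3n` respectively. -/
noncomputable def latticeTerm (a b c d e f : ℕ) (x : ℤ × ℤ) : ℝ :=
  1 / ((x.1 : ℝ) ^ a * (x.2 : ℝ) ^ b * ((x.1 : ℝ) + (x.2 : ℝ)) ^ c *
    ((x.1 : ℝ) + 2 * (x.2 : ℝ)) ^ d * ((x.1 : ℝ) + 3 * (x.2 : ℝ)) ^ e *
    (2 * (x.1 : ℝ) + 3 * (x.2 : ℝ)) ^ f)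

/-- The index set of the lattice sum: `n ≥ 1`, `m ≠ 0`, `m+n ≠ 0`, `m+2n ≠ 0`, `m+3n ≠ 0`,
`2m+3n ≠ 0`. -/
def latticeCondN (x : ℤ × ℤ) : Prop :=
  1 ≤ x.2 ∧ x.1 ≠ 0 ∧ x.1 + x.2 ≠ 0 ∧ x.1 + 2 * x.2 ≠ 0 ∧ x.1 + 3 * x.2 ≠ 0 ∧
    2 * x.1 + 3 * x.2 ≠ 0

theorem tsum_eq_zero_of_comp_perm_eq_neg {β E : Type*} [AddCommGroup E] [IsAddTorsionFree E]
    [TopologicalSpace E] [IsTopologicalAddGroup E] [T2Space E] (e : Equiv.Perm β) {g : β → E}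
    (h : ∀ x, g (e x) = -g x) : ∑' x, g x = 0 := by
  have := e.tsum_eq g
  simp only [h, tsum_neg] at this
  exact self_eq_neg.mp this.symm

theorem one_le_abs_intCast {R : Type*} [Ring R] [LinearOrder R] [IsStrictOrderedRing R] {k : ℤ}
    (hk : k ≠ 0) : (1 : R) ≤ |(k : R)| := by
  exact_mod_cast Int.one_le_abs hk

theorem abs_latticeTerm_le {a b c d e f : ℕ} (ha : 2 ≤ a) (hb : 2 ≤ b) {x : ℤ × ℤ}
    (hx : latticeCondN x) :
    |latticeTerm a b c d e f x| ≤ 1 / (x.1 : ℝ) ^ 2 * (1 / (x.2 : ℝ) ^ 2) := by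
  obtain ⟨hn, hm, h₁, h₂, h₃, h₄⟩ := hx
  have sq_le {k : ℤ} (hk : k ≠ 0) {j : ℕ} (hj : 2 ≤ j) : (k : ℝ) ^ 2 ≤ |(k : ℝ)| ^ j := by
    rw [← sq_abs]
    exact pow_le_pow_right₀ (one_le_abs_intCast (R := ℝ) hk) hj
  have h₁' := one_le_abs_intCast (R := ℝ) h₁
  have h₂' := one_le_abs_intCast (R := ℝ) h₂
  have h₃' := one_le_abs_intCast (R := ℝ) h₃
  have h₄' := one_le_abs_intCast (R := ℝ) h₄
  push_cast at h₁' h₂' h₃' h₄'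
  rw [latticeTerm, abs_div, abs_one, div_mul_div_comm, one_mul]
  refine one_div_le_one_div_of_le (by positivity) ?_
  simp only [abs_mul, abs_pow]
  calc (x.1 : ℝ) ^ 2 * (x.2 : ℝ) ^ 2 = (x.1 : ℝ) ^ 2 * (x.2 : ℝ) ^ 2 * 1 * 1 * 1 * 1 := by ring
    _ ≤ _ := by
      gcongr
      exacts [sq_le hm ha, sq_le (by omega) hb, one_le_pow₀ h₁', one_le_pow₀ h₂',
        one_le_pow₀ h₃', one_le_pow₀ h₄']

theorem summable_indicator_latticeTerm {a b : ℕ} (c d e f : ℕ) (ha : 2 ≤ a) (hb : 2 ≤ b)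
    {T : Set (ℤ × ℤ)} (hT : T ⊆ {x | latticeCondN x}) :
    Summable (T.indicator (latticeTerm a b c d e f)) := by
  have h2 : Summable fun k : ℤ => 1 / (k : ℝ) ^ 2 := Real.summable_one_div_int_pow.mpr one_lt_two
  refine (h2.mul_of_nonneg h2 (fun _ => by positivity) (fun _ => by positivity)).of_norm_bounded
    fun x => ?_
  by_cases hx : x ∈ T
  · rw [Set.indicator_of_mem hx, Real.norm_eq_abs]
    exact abs_latticeTerm_le ha hb (hT hx)
  · rw [Set.indicator_of_notMem hx, norm_zero]
    positivity

/- The simple reflections of the Weyl group of `G₂`, written in the coordinates `(m, n)`: each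
permutes the forms `m, n, m+n, m+2n, m+3n, 2m+3n` up to sign. -/
def g2Reflection₁ : Equiv.Perm (ℤ × ℤ) :=
  Function.Involutive.toPerm (fun x => (-x.1, x.1 + x.2)) fun x => by ext <;> simp

def g2Reflection₂ : Equiv.Perm (ℤ × ℤ) :=
  Function.Involutive.toPerm (fun x => (x.1, -(x.1 + x.2))) fun x => by ext <;> simp

@[simp]
theorem g2Reflection₁_apply (x : ℤ × ℤ) : g2Reflection₁ x = (-x.1, x.1 + x.2) := rfl

@[simp]
theorem g2Reflection₂_apply (x : ℤ × ℤ) : g2Reflection₂ x = (x.1, -(x.1 + x.2)) := rfl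

/-- Both reflections map each of the pairs `{n, m+n}` and `{m+3n, 2m+3n}` to itself up to sign. -/
theorem latticeTerm_eq_one_div_paired (a b c d : ℕ) (x : ℤ × ℤ) :
    latticeTerm a b b c d d x = 1 / ((x.1 : ℝ) ^ a * ((x.2 : ℝ) * (x.1 + x.2)) ^ b *
      ((x.1 : ℝ) + 2 * x.2) ^ c * (((x.1 : ℝ) + 3 * x.2) * (2 * x.1 + 3 * x.2)) ^ d) := by
  rw [latticeTerm, mul_pow, mul_pow]
  ring

theorem latticeTerm_g2Reflection₁ {a b c d : ℕ} (ha : Even a) (x : ℤ × ℤ) :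
    latticeTerm a b b c d d (g2Reflection₁ x) = latticeTerm a b b c d d x := by
  simp only [latticeTerm_eq_one_div_paired, g2Reflection₁_apply]
  push_cast
  rw [ha.neg_pow]
  ring

theorem latticeTerm_g2Reflection₂ {a b c d : ℕ} (hc : Odd c) (x : ℤ × ℤ) :
    latticeTerm a b b c d d (g2Reflection₂ x) = -latticeTerm a b b c d d x := by
  simp only [latticeTerm_eq_one_div_paired, g2Reflection₂_apply]
  push_cast
  rw [show (x.1 : ℝ) + 2 * -(x.1 + x.2) = -(x.1 + 2 * x.2) by ring, hc.neg_pow]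
  ring

def posQuadrant : Set (ℤ × ℤ) := {x | 0 < x.1 ∧ 0 < x.2}

def negSumIndexSet : Set (ℤ × ℤ) := {x | latticeCondN x ∧ x.1 + x.2 < 0}

theorem indicator_latticeCondN_eq_add {M : Type*} [AddCommMonoid M] (g : ℤ × ℤ → M) :
    {x | latticeCondN x}.indicator g = posQuadrant.indicator g +
      (g2Reflection₁ ⁻¹' posQuadrant).indicator g + negSumIndexSet.indicator g := by
  classical
  ext x
  simp only [Pi.add_apply, Set.indicator_apply, Set.mem_preimage, g2Reflection₁_apply,
    posQuadrant, negSumIndexSet, latticeCondN, Set.mem_ofPred_eq]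
  split_ifs <;> first | (exfalso; omega) | simp

theorem preimage_g2Reflection₂_negSumIndexSet :
    g2Reflection₂ ⁻¹' negSumIndexSet = negSumIndexSet := by
  ext x
  simp only [Set.mem_preimage, g2Reflection₂_apply, negSumIndexSet, latticeCondN,
    Set.mem_ofPred_eq]
  omega

theorem posQuadrant_subset_latticeCondN : posQuadrant ⊆ {x | latticeCondN x} := by
  intro x hx
  simp only [posQuadrant, latticeCondN, Set.mem_ofPred_eq] at hx ⊢
  omega

theorem preimage_g2Reflection₁_posQuadrant_subset_latticeCondN :
    g2Reflection₁ ⁻¹' posQuadrant ⊆ {x | latticeCondN x} := by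
  intro x hx
  simp only [Set.mem_preimage, g2Reflection₁_apply, posQuadrant, latticeCondN,
    Set.mem_ofPred_eq] at hx ⊢
  omega

theorem negSumIndexSet_subset_latticeCondN : negSumIndexSet ⊆ {x | latticeCondN x} :=
  fun _ hx => hx.1

theorem tsum_indicator_preimage_g2Reflection₁ {a b c d : ℕ} (ha : Even a) (s : Set (ℤ × ℤ)) :
    ∑' x, (g2Reflection₁ ⁻¹' s).indicator (latticeTerm a b b c d d) x =
      ∑' x, s.indicator (latticeTerm a b b c d d) x := by
  rw [← g2Reflection₁.tsum_eq (s.indicator _)]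
  simp only [← Set.indicator_comp_right, Function.comp_def, latticeTerm_g2Reflection₁ ha]

theorem tsum_indicator_negSumIndexSet {a b c d : ℕ} (hc : Odd c) :
    ∑' x, negSumIndexSet.indicator (latticeTerm a b b c d d) x = 0 := by
  refine tsum_eq_zero_of_comp_perm_eq_neg g2Reflection₂ fun x => ?_
  rw [← Set.indicator_comp_right, preimage_g2Reflection₂_negSumIndexSet, Function.comp_def]
  simp only [latticeTerm_g2Reflection₂ hc, Set.indicator_neg]

theorem tsum_indicator_posQuadrant {a b c d e f : ℕ}
    (h : Summable (posQuadrant.indicator (latticeTerm a b c d e f))) :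
    ∑' x, posQuadrant.indicator (latticeTerm a b c d e f) x = zetaG2 a b c d e f := by
  let g : ℕ+ × ℕ+ → ℤ × ℤ := fun z => (((z.1 : ℕ) : ℤ), ((z.2 : ℕ) : ℤ))
  have hg : Function.Injective g := fun z w hzw => by
    simp only [g, Prod.mk.injEq, Nat.cast_inj, PNat.coe_inj] at hzw
    exact Prod.ext hzw.1 hzw.2
  have hrange : Function.support (posQuadrant.indicator (latticeTerm a b c d e f)) ⊆
      Set.range g := by
    intro x hx
    obtain ⟨hm, hn⟩ := Set.mem_of_indicator_ne_zero hx
    exact ⟨((⟨x.1.toNat, by omega⟩ : ℕ+), (⟨x.2.toNat, by omega⟩ : ℕ+)),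
      Prod.ext (by simp [g]; omega) (by simp [g]; omega)⟩
  rw [← hg.tsum_eq hrange, ← Function.comp_def, (h.comp_injective hg).tsum_prod, zetaG2]
  refine tsum_congr fun m => tsum_congr fun n => ?_
  rw [Function.comp_apply, Set.indicator_of_mem (by simp [g, posQuadrant]), latticeTerm]
  simp only [g, Int.cast_natCast]

theorem latticeSum_eq_two_zetaG2_general (p q r u : ℕ) (hp : 2 ≤ p) (hq : 2 ≤ q) (hpeven : Even p)
    (hrodd : Odd r) :
    Summable (fun x : {x : ℤ × ℤ // latticeCondN x} => latticeTerm p q q r u u x.1) ∧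
      ∑' x : {x : ℤ × ℤ // latticeCondN x}, latticeTerm p q q r u u x.1 =
        2 * zetaG2 p q q r u u := by
  have summable {T : Set (ℤ × ℤ)} (hT : T ⊆ {x | latticeCondN x}) :=
    summable_indicator_latticeTerm q r u u hp hq hT
  have hQ := summable posQuadrant_subset_latticeCondN
  have hQ' := summable preimage_g2Reflection₁_posQuadrant_subset_latticeCondN
  have hB := summable negSumIndexSet_subset_latticeCondN
  refine ⟨summable_subtype_iff_indicator.mpr (summable subset_rfl), ?_⟩
  calc ∑' x : {x : ℤ × ℤ // latticeCondN x}, latticeTerm p q q r u u x.1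
      = ∑' x, {x | latticeCondN x}.indicator (latticeTerm p q q r u u) x := tsum_subtype _ _
    _ = ∑' x, posQuadrant.indicator (latticeTerm p q q r u u) x +
          ∑' x, (g2Reflection₁ ⁻¹' posQuadrant).indicator (latticeTerm p q q r u u) x +
          ∑' x, negSumIndexSet.indicator (latticeTerm p q q r u u) x := by
      simp only [indicator_latticeCondN_eq_add, Pi.add_apply]
      rw [(hQ.add hQ').tsum_add hB, hQ.tsum_add hQ']
    _ = 2 * zetaG2 p q q r u u := by
      rw [tsum_indicator_preimage_g2Reflection₁ hpeven,
        tsum_indicator_posQuadrant hQ,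
        tsum_indicator_negSumIndexSet hrodd]
      ring

theorem latticeSum_eq_two_zetaG2 (p q r u : ℕ) (hp : 2 ≤ p) (hq : 2 ≤ q) (hr : 2 ≤ r)
    (hu : 2 ≤ u) (hpeven : Even p) (hrodd : Odd r) :
    Summable (fun x : {x : ℤ × ℤ // latticeCondN x} => latticeTerm p q q r u u x.1) ∧
      ∑' x : {x : ℤ × ℤ // latticeCondN x}, latticeTerm p q q r u u x.1 =
        2 * zetaG2 p q q r u u :=
  latticeSum_eq_two_zetaG2_general p q r u hp hq hpeven hrodd
end

section
/- Let p, q, r, u be integers with p, q, r, u ≥ 2, q even and u odd. Then the lattice sum S = ∑ 1/(m^p · n^q · (m+n)^r · (m+2n)^r · (m+3n)^p · (2m+3n)^u), taken over all pairs (m, n) with m ≥ 1 an integer and n a nonzero integer such that m+n ≠ 0, m+2n ≠ 0, m+3n ≠ 0 and 2m+3n ≠ 0, converges and equals 2·ζ₂(p,q,r,r,p,u; G₂). -/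
/-- The index set of the lattice sum: `m ≥ 1`, `n ≠ 0`, `m+n ≠ 0`, `m+2n ≠ 0`, `m+3n ≠ 0`,
`2m+3n ≠ 0`. -/
def latticeCondM (x : ℤ × ℤ) : Prop :=
  1 ≤ x.1 ∧ x.2 ≠ 0 ∧ x.1 + x.2 ≠ 0 ∧ x.1 + 2 * x.2 ≠ 0 ∧ x.1 + 3 * x.2 ≠ 0 ∧
    2 * x.1 + 3 * x.2 ≠ 0

open Function Set

theorem tsum_eq_zero_of_involutive_of_neg {α G : Type*} [AddCommGroup G] [TopologicalSpace G]
    [IsTopologicalAddGroup G] [T2Space G] [IsAddTorsionFree G] {f : α → G} {σ : α → α}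
    (hσ : Involutive σ) (hf : ∀ x, f (σ x) = -f x) : ∑' x, f x = 0 := by
  rw [← self_eq_neg]
  calc ∑' x, f x = ∑' x, f (hσ.toPerm σ x) := ((hσ.toPerm σ).tsum_eq f).symm
    _ = -∑' x, f x := by simp only [Involutive.coe_toPerm, hf, tsum_neg]

theorem Int.sq_le_abs_pow {z : ℤ} {k : ℕ} (hk : 2 ≤ k) (hz : z ≠ 0) : z ^ 2 ≤ |z ^ k| := by
  rw [abs_pow, ← sq_abs]
  exact pow_le_pow_right₀ (Int.one_le_abs hz) hk

namespace G2

variable {a b c d e f : ℕ}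

def latticeDenom (a b c d e f : ℕ) (x : ℤ × ℤ) : ℤ :=
  x.1 ^ a * x.2 ^ b * (x.1 + x.2) ^ c * (x.1 + 2 * x.2) ^ d * (x.1 + 3 * x.2) ^ e *
    (2 * x.1 + 3 * x.2) ^ f

theorem latticeTerm_eq_one_div_latticeDenom (x : ℤ × ℤ) :
    latticeTerm a b c d e f x = 1 / (latticeDenom a b c d e f x : ℝ) := by
  simp [latticeTerm, latticeDenom]

theorem sq_mul_sq_le_abs_latticeDenom (ha : 2 ≤ a) (hb : 2 ≤ b) {x : ℤ × ℤ}
    (hx : latticeDenom a b c d e f x ≠ 0) : x.1 ^ 2 * x.2 ^ 2 ≤ |latticeDenom a b c d e f x| := by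
  simp only [latticeDenom, mul_ne_zero_iff] at hx
  obtain ⟨⟨⟨⟨⟨h₁, h₂⟩, h₃⟩, h₄⟩, h₅⟩, h₆⟩ := hx
  simp only [latticeDenom, abs_mul]
  calc x.1 ^ 2 * x.2 ^ 2 = x.1 ^ 2 * x.2 ^ 2 * 1 * 1 * 1 * 1 := by ring
    _ ≤ _ := by
      gcongr
      · exact Int.sq_le_abs_pow ha (ne_zero_pow (by omega) h₁)
      · exact Int.sq_le_abs_pow hb (ne_zero_pow (by omega) h₂)
      all_goals exact Int.one_le_abs ‹_›

theorem abs_latticeTerm_le (ha : 2 ≤ a) (hb : 2 ≤ b) (x : ℤ × ℤ) :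
    |latticeTerm a b c d e f x| ≤ 1 / (x.1 : ℝ) ^ 2 * (1 / (x.2 : ℝ) ^ 2) := by
  rw [latticeTerm_eq_one_div_latticeDenom]
  rcases eq_or_ne (latticeDenom a b c d e f x) 0 with hx | hx
  · -- `1 / 0 = 0` at the points where a linear form vanishes
    rw [hx, Int.cast_zero, div_zero, abs_zero]
    positivity
  have hx₁ : x.1 ≠ 0 := fun h ↦ hx (by simp [latticeDenom, h]; omega)
  have hx₂ : x.2 ≠ 0 := fun h ↦ hx (by simp [latticeDenom, h]; omega)
  rw [abs_div, abs_one, ← Int.cast_abs, div_mul_div_comm, one_mul]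
  apply one_div_le_one_div_of_le (by positivity)
  exact_mod_cast sq_mul_sq_le_abs_latticeDenom ha hb hx

theorem summable_latticeTerm (ha : 2 ≤ a) (hb : 2 ≤ b) :
    Summable (latticeTerm a b c d e f) := by
  have hsq : Summable fun k : ℤ ↦ 1 / (k : ℝ) ^ 2 := Real.summable_one_div_int_pow.mpr one_lt_two
  refine Summable.of_norm_bounded
    (hsq.mul_of_nonneg hsq (fun _ ↦ by positivity) (fun _ ↦ by positivity)) fun x ↦ ?_
  exact (Real.norm_eq_abs _).trans_le (abs_latticeTerm_le ha hb x)

theorem latticeTerm_neg (x : ℤ × ℤ) :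
    latticeTerm a b c d e f (-x) = (-1) ^ (a + b + c + d + e + f) * latticeTerm a b c d e f x := by
  simp only [latticeTerm, Prod.fst_neg, Prod.snd_neg, Int.cast_neg, mul_neg, ← neg_add]
  generalize (x.1 : ℝ) = m, (x.2 : ℝ) = n
  simp only [neg_pow m, neg_pow n, neg_pow (m + n), neg_pow (m + 2 * n), neg_pow (m + 3 * n),
    neg_pow (2 * m + 3 * n), one_div, mul_inv, ← inv_pow, inv_neg_one]
  ring

def reflect (x : ℤ × ℤ) : ℤ × ℤ := (x.1 + 3 * x.2, -x.2)

theorem reflect_involutive : Involutive reflect := fun x ↦ by simp [reflect]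

theorem latticeTerm_reflect (hb : Even b) (x : ℤ × ℤ) :
    latticeTerm a b c d e f (reflect x) = latticeTerm e b d c a f x := by
  simp only [latticeTerm, reflect, Int.cast_add, Int.cast_mul, Int.cast_neg, Int.cast_ofNat,
    hb.neg_pow]
  ring

def pnatPair (y : ℕ+ × ℕ+) : ℤ × ℤ := ((y.1 : ℤ), (y.2 : ℤ))

theorem pnatPair_injective : Injective pnatPair := fun y z h ↦ by
  simp only [pnatPair, Prod.mk.injEq, Nat.cast_inj, PNat.coe_inj] at h
  exact Prod.ext h.1 h.2

theorem range_pnatPair : range pnatPair = {x | 0 < x.1 ∧ 0 < x.2} := by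
  ext x
  refine ⟨?_, fun ⟨h₁, h₂⟩ ↦ ⟨(⟨x.1.toNat, by omega⟩, ⟨x.2.toNat, by omega⟩), ?_⟩⟩
  · rintro ⟨y, rfl⟩
    simp [pnatPair]
  · ext <;> simp [pnatPair, h₁.le, h₂.le]

theorem range_reflect_comp_pnatPair :
    range (reflect ∘ pnatPair) = {x | 0 < x.1 + 3 * x.2 ∧ x.2 < 0} := by
  rw [range_comp, range_pnatPair, reflect_involutive.image_eq_preimage_symm]
  ext x
  simp [reflect]

theorem zetaG2_eq_tsum_latticeTerm (ha : 2 ≤ a) (hb : 2 ≤ b) :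
    zetaG2 a b c d e f = ∑' y, latticeTerm a b c d e f (pnatPair y) := by
  have hs := (summable_latticeTerm (c := c) (d := d) (e := e) (f := f) ha hb).comp_injective
    pnatPair_injective
  calc zetaG2 a b c d e f = ∑' (m : ℕ+) (n : ℕ+), latticeTerm a b c d e f (pnatPair (m, n)) := by
        simp [zetaG2, latticeTerm, pnatPair]
    _ = _ := (hs.tsum_prod' hs.prod_factor).symm

section Cancellation

variable {p q r u : ℕ}

theorem latticeTerm_neg_reflect (hq : Even q) (hu : Odd u) (x : ℤ × ℤ) :
    latticeTerm p q r r p u (-reflect x) = -latticeTerm p q r r p u x := by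
  have hodd : Odd (p + q + r + r + p + u) := by
    obtain ⟨k, hk⟩ := hq
    obtain ⟨l, hl⟩ := hu
    exact ⟨p + r + k + l, by omega⟩
  rw [latticeTerm_neg, latticeTerm_reflect hq, hodd.neg_one_pow, neg_one_mul]

def cancellingCone : Set (ℤ × ℤ) := {x | latticeCondM x ∧ x.2 < 0 ∧ x.1 + 3 * x.2 < 0}

theorem neg_reflect_mem_cancellingCone {x : ℤ × ℤ} (hx : x ∈ cancellingCone) :
    -reflect x ∈ cancellingCone := by
  simp only [cancellingCone, latticeCondM, reflect, mem_ofPred_eq, Prod.fst_neg, Prod.snd_neg]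
    at hx ⊢
  omega

theorem tsum_cancellingCone_eq_zero (hq : Even q) (hu : Odd u) :
    ∑' x : cancellingCone, latticeTerm p q r r p u x = 0 :=
  tsum_eq_zero_of_involutive_of_neg (σ := fun x ↦ ⟨-reflect x, neg_reflect_mem_cancellingCone x.2⟩)
    (fun x ↦ Subtype.ext (by simp [reflect])) (fun x ↦ latticeTerm_neg_reflect hq hu x)

end Cancellation

theorem setOf_latticeCondM_eq :
    {x | latticeCondM x} = range pnatPair ∪ range (reflect ∘ pnatPair) ∪ cancellingCone := by
  rw [range_pnatPair, range_reflect_comp_pnatPair]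
  ext x
  simp only [cancellingCone, latticeCondM, mem_union, mem_ofPred_eq]
  omega

theorem disjoint_range_pnatPair_range_reflect_comp :
    Disjoint (range pnatPair) (range (reflect ∘ pnatPair)) := by
  rw [range_pnatPair, range_reflect_comp_pnatPair, disjoint_left]
  rintro x ⟨-, hx⟩ ⟨-, hx'⟩
  omega

theorem disjoint_range_union_cancellingCone :
    Disjoint (range pnatPair ∪ range (reflect ∘ pnatPair)) cancellingCone := by
  rw [range_pnatPair, range_reflect_comp_pnatPair, disjoint_left]
  simp only [cancellingCone, mem_union, mem_ofPred_eq]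
  omega

end G2

open G2 in
theorem latticeSum_eq_two_zetaG2'_general (p q r u : ℕ) (hp : 2 ≤ p) (hq : 2 ≤ q)
    (hqeven : Even q) (huodd : Odd u) :
    Summable (fun x : {x : ℤ × ℤ // latticeCondM x} => latticeTerm p q r r p u x.1) ∧
      ∑' x : {x : ℤ × ℤ // latticeCondM x}, latticeTerm p q r r p u x.1 =
        2 * zetaG2 p q r r p u := by
  have hf : Summable (latticeTerm p q r r p u) := summable_latticeTerm hp hq
  refine ⟨hf.subtype _, ?_⟩
  calc ∑' x : {x : ℤ × ℤ // latticeCondM x}, latticeTerm p q r r p u x.1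
      = ∑' x : ↥(range pnatPair ∪ range (reflect ∘ pnatPair) ∪ cancellingCone),
          latticeTerm p q r r p u x := tsum_congr_set_coe _ setOf_latticeCondM_eq
    _ = ∑' x : range pnatPair, latticeTerm p q r r p u x
          + ∑' x : range (reflect ∘ pnatPair), latticeTerm p q r r p u x
          + ∑' x : cancellingCone, latticeTerm p q r r p u x := by
      rw [Summable.tsum_union_disjoint disjoint_range_union_cancellingCone (hf.subtype _)
        (hf.subtype _), Summable.tsum_union_disjoint disjoint_range_pnatPair_range_reflect_comp
        (hf.subtype _) (hf.subtype _)]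
    _ = 2 * zetaG2 p q r r p u := by
      rw [tsum_range _ pnatPair_injective,
        tsum_range _ (reflect_involutive.injective.comp pnatPair_injective),
        tsum_cancellingCone_eq_zero hqeven huodd, zetaG2_eq_tsum_latticeTerm hp hq]
      simp only [comp_apply, latticeTerm_reflect hqeven]
      ring

theorem latticeSum_eq_two_zetaG2' (p q r u : ℕ) (hp : 2 ≤ p) (hq : 2 ≤ q) (hr : 2 ≤ r)
    (hu : 2 ≤ u) (hqeven : Even q) (huodd : Odd u) :
    Summable (fun x : {x : ℤ × ℤ // latticeCondM x} => latticeTerm p q r r p u x.1) ∧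
      ∑' x : {x : ℤ × ℤ // latticeCondM x}, latticeTerm p q r r p u x.1 =
        2 * zetaG2 p q r r p u :=
  latticeSum_eq_two_zetaG2'_general p q r u hp hq hqeven huodd
end

section
/- Let s be a complex number with Re s > 1, and let Σ₁₁ = ∑ 1/(m^{s+1} · n^3 · (m+n) · (m+2n)), the sum over all integers m ≥ 1 and nonzero integers n with m+n ≠ 0 and m+2n ≠ 0. Then Σ₁₁ = −π²·ζ(s+4) + (10 + 2^{−s−1})·ζ(s+6). -/
/-!
For fixed `m ≥ 1`, partial fractions in `n` give
`1/(n³(m+n)(m+2n)) = 1/(m²n³) - 3/(m³n²) + (1/(m+n) - 1/n)/m⁴ + 8 (1/n - 1/(n+m/2))/m⁴`.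
Summed over `n ∈ ℤ`, the odd term vanishes, `∑ 1/n² = π²/3`, and the two differences of
reciprocals sum to `0`: the first telescopes, the second telescopes for `m` even and reduces to
`∑ (1/n - 1/(n+1/2)) = 0` for `m` odd, which follows from the reflection `n ↦ -n`.
At the excluded points `n = 0, -m, -m/2` the partial fractions do not cancel, and removing them
adds `15/m⁵ - 5/m⁵`, plus `32/m⁵` when `m` is even. So the row sum is `-π²/m³ + (10 + 32·[2 ∣ m])/m⁵`, and summing against `m^{-(s+1)}`
gives `-π² ζ(s+4) + 10 ζ(s+6) + 32·2^{-s-6} ζ(s+6)`.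
-/

open Complex Filter Topology Bornology

section Telescoping

variable {G : Type*} [AddCommGroup G] [TopologicalSpace G] [IsTopologicalAddGroup G] [T2Space G]
  {ψ : ℤ → G}

theorem hasSum_int_add_one_sub_of_tendsto (hψ : Tendsto ψ cofinite (𝓝 0))
    (hs : Summable fun n => ψ (n + 1) - ψ n) : HasSum (fun n => ψ (n + 1) - ψ n) 0 := by
  have hpartial (N : ℕ) : ∑ n ∈ Finset.range N, ((ψ (n + 1) - ψ n) + (ψ (-n + 1) - ψ (-n))) =
      ψ N - ψ (1 - N) + (ψ 1 - ψ 0) := by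
    induction N with
    | zero => simp
    | succ N ih =>
      rw [Finset.sum_range_succ, ih]
      push_cast
      rw [show (1 : ℤ) - (N + 1) = -N by ring, show -(N : ℤ) + 1 = 1 - N by ring]
      abel
  have hψN : Tendsto (fun N : ℕ => ψ N) atTop (𝓝 0) :=
    Nat.cofinite_eq_atTop ▸ hψ.comp Nat.cast_injective.tendsto_cofinite
  have hψ1N : Tendsto (fun N : ℕ => ψ (1 - N)) atTop (𝓝 0) :=
    Nat.cofinite_eq_atTop ▸
      hψ.comp (Function.Injective.tendsto_cofinite fun a b h => by simpa using h)
  have hsum := hs.hasSum.nat_add_neg.tendsto_sum_nat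
  simp only [hpartial, zero_add] at hsum
  have := tendsto_nhds_unique hsum ((hψN.sub hψ1N).add_const (ψ 1 - ψ 0))
  rw [sub_zero, add_left_inj] at this
  exact this ▸ hs.hasSum

theorem hasSum_int_add_nat_sub_of_tendsto (hψ : Tendsto ψ cofinite (𝓝 0))
    (hs : Summable fun n => ψ (n + 1) - ψ n) (d : ℕ) : HasSum (fun n => ψ (n + d) - ψ n) 0 := by
  have hshift (j : ℕ) : HasSum (fun n => ψ (n + j + 1) - ψ (n + j)) 0 :=
    (Equiv.addRight (j : ℤ)).hasSum_iff.mpr (hasSum_int_add_one_sub_of_tendsto hψ hs)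
  convert hasSum_sum fun j (_ : j ∈ Finset.range d) => hshift j using 1
  · ext n
    simpa [add_assoc] using (Finset.sum_range_sub (fun j : ℕ => ψ (n + j)) d).symm
  · simp

end Telescoping

theorem tendsto_intCast_add_cobounded (a : ℝ) :
    Tendsto (fun n : ℤ => (n : ℝ) + a) cofinite (cobounded ℝ) :=
  (tendsto_add_const_cobounded a).comp
    (Metric.cobounded_eq_cocompact (α := ℝ) ▸ Int.tendsto_coe_cofinite)

theorem summable_inv_intCast_add_sub_inv (a b : ℝ) :
    Summable fun n : ℤ => ((n : ℝ) + a)⁻¹ - ((n : ℝ) + b)⁻¹ := by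
  have hsq (c : ℝ) : Summable fun n : ℤ => ((n : ℝ) + c)⁻¹ ^ 2 := by
    simpa [inv_pow, Real.rpow_two, sq_abs] using
      (Real.summable_one_div_int_add_rpow c 2).mpr one_lt_two
  refine (((hsq a).add (hsq b)).mul_left |b - a|).of_norm_bounded_eventually ?_
  filter_upwards [(tendsto_intCast_add_cobounded a).eventually_ne_cobounded 0,
    (tendsto_intCast_add_cobounded b).eventually_ne_cobounded 0] with n ha hb
  rw [inv_sub_inv' ha hb, Real.norm_eq_abs, abs_mul, abs_mul, add_sub_add_left_eq_sub]
  nlinarith [sq_nonneg (|((n : ℝ) + a)⁻¹| - |((n : ℝ) + b)⁻¹|), abs_nonneg (b - a),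
    abs_nonneg ((n : ℝ) + a)⁻¹, abs_nonneg ((n : ℝ) + b)⁻¹, sq_abs ((n : ℝ) + a)⁻¹,
    sq_abs ((n : ℝ) + b)⁻¹]

theorem hasSum_inv_intCast_add_nat_sub_inv (a : ℝ) (d : ℕ) :
    HasSum (fun n : ℤ => ((n : ℝ) + a + d)⁻¹ - ((n : ℝ) + a)⁻¹) 0 := by
  have hψ : Tendsto (fun n : ℤ => ((n : ℝ) + a)⁻¹) cofinite (𝓝 0) :=
    tendsto_inv₀_cobounded.comp (tendsto_intCast_add_cobounded a)
  have hs : Summable fun n : ℤ => (((n + 1 : ℤ) : ℝ) + a)⁻¹ - ((n : ℝ) + a)⁻¹ := by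
    simpa [add_assoc, add_comm a 1] using summable_inv_intCast_add_sub_inv (a + 1) a
  simpa [add_right_comm] using hasSum_int_add_nat_sub_of_tendsto hψ hs d

theorem hasSum_inv_intCast_sub_inv_add_half :
    HasSum (fun n : ℤ => (n : ℝ)⁻¹ - ((n : ℝ) + 1 / 2)⁻¹) 0 := by
  set f := fun n : ℤ => (n : ℝ)⁻¹ - ((n : ℝ) + 1 / 2)⁻¹
  have hf : Summable f := by simpa [f] using summable_inv_intCast_add_sub_inv 0 (1 / 2)
  -- `f n + f (-n)` telescopes, while reflecting `n ↦ -n` does not change the sum of `f`.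
  have hsym : HasSum (fun n => f n + f (-n)) 0 := by
    refine neg_zero (G := ℝ) ▸ (hasSum_inv_intCast_add_nat_sub_inv (-1 / 2) 1).neg.congr_fun
      fun n => ?_
    simp only [f, Int.cast_neg, inv_neg]
    rw [show -(n : ℝ) + 1 / 2 = -((n : ℝ) + -1 / 2) by ring, inv_neg]
    push_cast
    ring_nf
  have hrefl : HasSum (fun n => f (-n)) (∑' n, f n) :=
    (Equiv.neg ℤ).hasSum_iff.mpr hf.hasSum
  have := (hf.hasSum.add hrefl).unique hsym
  rw [← two_mul, mul_eq_zero_iff_left two_ne_zero] at this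
  exact this ▸ hf.hasSum

theorem hasSum_inv_intCast_sub_inv_add_nat_div_two (m : ℕ) :
    HasSum (fun n : ℤ => (n : ℝ)⁻¹ - ((n : ℝ) + m / 2)⁻¹) 0 := by
  obtain ⟨j, rfl | rfl⟩ := Nat.even_or_odd' m
  · simpa using (hasSum_inv_intCast_add_nat_sub_inv 0 j).neg
  · convert hasSum_inv_intCast_sub_inv_add_half.add
      (hasSum_inv_intCast_add_nat_sub_inv (1 / 2) j).neg using 1
    · ext n
      push_cast
      ring_nf
    · simp

theorem hasSum_inv_intCast_pow_three : HasSum (fun n : ℤ => ((n : ℝ) ^ 3)⁻¹) 0 := by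
  have hf : Summable fun n : ℤ => ((n : ℝ) ^ 3)⁻¹ := by
    simpa using Real.summable_one_div_int_pow.mpr (by norm_num : 1 < 3)
  have hodd : HasSum (fun n : ℤ => ((n : ℝ) ^ 3)⁻¹) (-∑' n : ℤ, ((n : ℝ) ^ 3)⁻¹) := by
    simpa [Odd.neg_pow (by decide : Odd 3)] using ((Equiv.neg ℤ).hasSum_iff.mpr hf.hasSum).neg
  have := hf.hasSum.unique hodd
  exact (by linarith : ∑' n : ℤ, ((n : ℝ) ^ 3)⁻¹ = 0) ▸ hf.hasSum

theorem hasSum_inv_intCast_sq : HasSum (fun n : ℤ => ((n : ℝ) ^ 2)⁻¹) (Real.pi ^ 2 / 3) := by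
  have h := hasSum_zeta_two.of_nat_of_neg (f := fun n : ℤ => 1 / (n : ℝ) ^ 2)
    (by simpa using hasSum_zeta_two)
  rw [show Real.pi ^ 2 / 3 = Real.pi ^ 2 / 6 + Real.pi ^ 2 / 6 - 1 / ((0 : ℤ) : ℝ) ^ 2 by
    simp; ring]
  exact h.congr_fun fun n => (one_div _).symm

theorem hasSum_ite_two_mul_intCast_eq_neg (m : ℕ) (c : ℝ) :
    HasSum (fun n : ℤ => if 2 * (n : ℝ) = -m then c else 0) (if Even m then c else 0) := by
  obtain ⟨j, rfl | rfl⟩ := Nat.even_or_odd' m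
  · have hcond (n : ℤ) : 2 * (n : ℝ) = -((2 * j : ℕ) : ℝ) ↔ n = -(j : ℤ) := by
      constructor <;> intro h
      · have : 2 * n = -(2 * j : ℤ) := by exact_mod_cast h
        omega
      · subst h; push_cast; ring
    simpa only [hcond, even_two_mul, if_true] using hasSum_ite_eq (-(j : ℤ)) c
  · have hcond (n : ℤ) : 2 * (n : ℝ) ≠ -((2 * j + 1 : ℕ) : ℝ) := by
      intro h
      have : 2 * n = -(2 * j + 1 : ℤ) := by exact_mod_cast h
      omega
    simpa only [hcond, Nat.not_even_two_mul_add_one, if_false] using hasSum_zero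

/-- The indicator terms compensate the junk values `0⁻¹ = 0` of the partial fractions at the
poles `y = 0`, `y = -x` and `y = -x/2`, where the left-hand side is `1 / 0 = 0` as well. -/
theorem one_div_pow_three_mul_add_mul_add_two_mul (x y : ℝ) (hx : x ≠ 0) :
    1 / (y ^ 3 * (x + y) * (x + 2 * y)) =
      (x ^ 2)⁻¹ * (y ^ 3)⁻¹ - 3 * (x ^ 3)⁻¹ * (y ^ 2)⁻¹ + (x ^ 4)⁻¹ * ((y + x)⁻¹ - y⁻¹)
        + 8 * (x ^ 4)⁻¹ * (y⁻¹ - (y + x / 2)⁻¹) + (if y = 0 then 15 / x ^ 5 else 0)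
        + (if y = -x then -5 / x ^ 5 else 0) + (if 2 * y = -x then 32 / x ^ 5 else 0) := by
  rcases eq_or_ne y 0 with rfl | hy
  · have : (0 : ℝ) ≠ -x := by simpa [eq_comm] using hx
    simp [this]
    field_simp
    ring
  rcases eq_or_ne y (-x) with rfl | hyx
  · have : 2 * -x ≠ -x := by contrapose! hx; linarith
    simp only [if_true, if_neg this, if_neg hy]
    field_simp
    ring
  rcases eq_or_ne (2 * y) (-x) with h2 | h2
  · obtain rfl : x = -2 * y := by linarith
    simp only [if_true, if_neg hy, if_neg hyx, h2]
    field_simp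
    ring
  simp only [if_neg hy, if_neg hyx, if_neg h2, add_zero]
  have h3 : y + x / 2 ≠ 0 := by contrapose! h2; linarith
  have h4 : x + y ≠ 0 := by contrapose! hyx; linarith
  rw [show x + 2 * y = 2 * (y + x / 2) by ring, add_comm y x]
  generalize hz : y + x / 2 = z at *
  field_simp
  subst hz
  ring

noncomputable def sigma11Row (m : ℕ) : ℝ :=
  -Real.pi ^ 2 / m ^ 3 + (10 + if Even m then 32 else 0) / m ^ 5

theorem hasSum_sigma11Row (m : ℕ) (hm : m ≠ 0) :
    HasSum (fun n : ℤ => 1 / ((n : ℝ) ^ 3 * (m + n) * (m + 2 * n))) (sigma11Row m) := by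
  have hx : (m : ℝ) ≠ 0 := Nat.cast_ne_zero.mpr hm
  have hpole (n : ℤ) : (n : ℝ) = -m ↔ n = -(m : ℤ) := by norm_cast
  have hsum :=
    (((((((hasSum_inv_intCast_pow_three.mul_left ((m : ℝ) ^ 2)⁻¹).sub
      ((hasSum_inv_intCast_sq.mul_left ((m : ℝ) ^ 3)⁻¹).mul_left 3)).add
      ((hasSum_inv_intCast_add_nat_sub_inv 0 m).mul_left ((m : ℝ) ^ 4)⁻¹)).add
      ((hasSum_inv_intCast_sub_inv_add_nat_div_two m).mul_left (8 * ((m : ℝ) ^ 4)⁻¹))).add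
      (hasSum_ite_eq 0 (15 / (m : ℝ) ^ 5))).add
      (hasSum_ite_eq (-(m : ℤ)) (-5 / (m : ℝ) ^ 5))).add
      (hasSum_ite_two_mul_intCast_eq_neg m (32 / (m : ℝ) ^ 5)))
  have key : HasSum (fun n : ℤ => 1 / ((n : ℝ) ^ 3 * (m + n) * (m + 2 * n))) _ :=
    hsum.congr_fun fun n => by
      rw [one_div_pow_three_mul_add_mul_add_two_mul _ _ hx]
      simp [hpole, mul_assoc]
  convert key using 1
  rw [sigma11Row]
  split_ifs <;> field_simp <;> ring

theorem abs_one_div_pow_three_mul_add_mul_add_two_mul_le (a b : ℤ) :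
    |1 / ((b : ℝ) ^ 3 * (a + b) * (a + 2 * b))| ≤ 1 / (b : ℝ) ^ 2 := by
  rcases eq_or_ne (b ^ 3 * (a + b) * (a + 2 * b)) 0 with h | h
  · have : (b : ℝ) ^ 3 * (a + b) * (a + 2 * b) = 0 := by exact_mod_cast h
    rw [this, div_zero, abs_zero]
    positivity
  have hb : b ≠ 0 := by rintro rfl; simp at h
  have hle : b ^ 2 ≤ |b ^ 3 * (a + b) * (a + 2 * b)| := by
    have h1 := Int.one_le_abs (right_ne_zero_of_mul h)
    have h2 := Int.one_le_abs (right_ne_zero_of_mul (left_ne_zero_of_mul h))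
    rw [abs_mul, abs_mul, abs_pow, ← sq_abs b]
    calc |b| ^ 2 ≤ |b| ^ 3 := pow_le_pow_right₀ (Int.one_le_abs hb) (by norm_num)
      _ ≤ |b| ^ 3 * |a + b| * |a + 2 * b| := by
        rw [mul_assoc]
        exact le_mul_of_one_le_right (by positivity) (one_le_mul_of_one_le_of_one_le h2 h1)
  rw [abs_div, abs_one]
  exact one_div_le_one_div_of_le (by positivity) (by exact_mod_cast hle)

theorem hasSum_one_div_nat_cpow {s : ℂ} (hs : 1 < s.re) :
    HasSum (fun n : ℕ => 1 / (n : ℂ) ^ s) (riemannZeta s) := by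
  rw [zeta_eq_tsum_one_div_nat_cpow hs]
  exact (summable_one_div_nat_cpow.mpr hs).hasSum

theorem hasSum_ite_even_one_div_nat_cpow {s : ℂ} (hs : 1 < s.re) :
    HasSum (fun n : ℕ => if Even n then 1 / (n : ℂ) ^ s else 0) (2 ^ (-s) * riemannZeta s) := by
  have hinj : Function.Injective (fun k : ℕ => 2 * k) := mul_right_injective₀ two_ne_zero
  rw [← hinj.hasSum_iff fun n hn => if_neg fun ⟨k, hk⟩ => hn ⟨k, by simp [hk, two_mul]⟩]
  refine ((hasSum_one_div_nat_cpow hs).mul_left (2 ^ (-s))).congr_fun fun k => ?_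
  have h2k := natCast_mul_natCast_cpow 2 k s
  push_cast at h2k
  simp only [Function.comp, even_two_mul, if_true, Nat.cast_mul, Nat.cast_ofNat, h2k, cpow_neg]
  rw [one_div, one_div, mul_inv]

theorem hasSum_cpow_inv_mul_sigma11Row {s : ℂ} (hs : 1 < s.re) :
    HasSum (fun m : ℕ => ((m : ℂ) ^ (s + 1))⁻¹ * (sigma11Row m : ℂ))
      (-(Real.pi : ℂ) ^ 2 * riemannZeta (s + 4) +
        (10 + (2 : ℂ) ^ (-s - 1)) * riemannZeta (s + 6)) := by
  have h4 : 1 < (s + 4).re := by simp; linarith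
  have h6 : 1 < (s + 6).re := by simp; linarith
  have hsum := (((hasSum_one_div_nat_cpow h4).mul_left (-(Real.pi : ℂ) ^ 2)).add
    ((hasSum_one_div_nat_cpow h6).mul_left 10)).add
    ((hasSum_ite_even_one_div_nat_cpow h6).mul_left 32)
  have h32 : (32 : ℂ) * 2 ^ (-(s + 6)) = 2 ^ (-s - 1) := by
    rw [show (32 : ℂ) = 2 ^ ((5 : ℕ) : ℂ) by norm_num, ← cpow_add _ _ two_ne_zero]
    congr 1
    push_cast
    ring
  have key : HasSum (fun m : ℕ => ((m : ℂ) ^ (s + 1))⁻¹ * (sigma11Row m : ℂ)) _ :=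
    hsum.congr_fun fun m => by
      rcases eq_or_ne m 0 with rfl | hm
      · simp [zero_cpow (ne_zero_of_one_lt_re h4), zero_cpow (ne_zero_of_one_lt_re h6),
          zero_cpow (ne_zero_of_one_lt_re (by simp; linarith : 1 < (s + 1).re))]
      have hpow (k : ℕ) : (m : ℂ) ^ (s + 1 + k) = m ^ (s + 1) * m ^ k := by
        rw [cpow_add _ _ (Nat.cast_ne_zero.mpr hm), cpow_natCast]
      rw [show s + 4 = s + 1 + (3 : ℕ) by push_cast; ring,
        show s + 6 = s + 1 + (5 : ℕ) by push_cast; ring, hpow, hpow, sigma11Row]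
      split_ifs <;> push_cast <;> field_simp <;> ring
  convert key using 1
  rw [← h32]
  ring

/-- At the excluded lattice points the denominator vanishes, so the term is the junk value
`1 / 0 = 0`; the same holds for `m = 0` since `0 ^ (s + 1) = 0` for `s ≠ -1`. -/
noncomputable def sigma11Term (s : ℂ) (m : ℕ) (n : ℤ) : ℂ :=
  1 / ((m : ℂ) ^ (s + 1) * (n : ℂ) ^ 3 * (m + n) * (m + 2 * n))

theorem sigma11Term_eq_inv_cpow_mul_ofReal (s : ℂ) (m : ℕ) (n : ℤ) :
    sigma11Term s m n =
      ((m : ℂ) ^ (s + 1))⁻¹ * ((1 / ((n : ℝ) ^ 3 * (m + n) * (m + 2 * n)) : ℝ) : ℂ) := by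
  rw [sigma11Term]
  push_cast
  rw [one_div, one_div, ← mul_inv, mul_assoc, mul_assoc, mul_assoc]

theorem ne_zero_of_sigma11Term_ne_zero {s : ℂ} (hs : 1 < s.re) {m : ℕ} {n : ℤ}
    (h : sigma11Term s m n ≠ 0) : m ≠ 0 ∧ n ≠ 0 ∧ (m : ℤ) + n ≠ 0 ∧ (m : ℤ) + 2 * n ≠ 0 := by
  have hs1 : s + 1 ≠ 0 := ne_zero_of_one_lt_re (by simp; linarith)
  refine ⟨?_, ?_, ?_, ?_⟩ <;> rintro hz <;> apply h <;> rw [sigma11Term]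
  · simp [hz, zero_cpow hs1]
  · simp [hz]
  · simp [show (m : ℂ) + n = 0 by exact_mod_cast hz]
  · simp [show (m : ℂ) + 2 * n = 0 by exact_mod_cast hz]

theorem summable_sigma11Term {s : ℂ} (hs : 1 < s.re) :
    Summable fun p : ℕ × ℤ => sigma11Term s p.1 p.2 := by
  have h1 : Summable fun m : ℕ => ‖((m : ℂ) ^ (s + 1))⁻¹‖ := by
    simpa [one_div] using summable_norm_iff.mpr
      (summable_one_div_nat_cpow.mpr (by simp; linarith : 1 < (s + 1).re))
  have h2 : Summable fun n : ℤ => 1 / (n : ℝ) ^ 2 := Real.summable_one_div_int_pow.mpr one_lt_two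
  refine .of_norm_bounded (h1.mul_of_nonneg h2 (fun _ => norm_nonneg _) fun _ => by positivity)
    fun p => ?_
  rw [sigma11Term_eq_inv_cpow_mul_ofReal, norm_mul, norm_real, Real.norm_eq_abs]
  gcongr
  simpa using abs_one_div_pow_three_mul_add_mul_add_two_mul_le p.1 p.2

theorem hasSum_sigma11Term_fiber {s : ℂ} (hs : 1 < s.re) (m : ℕ) :
    HasSum (fun n : ℤ => sigma11Term s m n) (((m : ℂ) ^ (s + 1))⁻¹ * (sigma11Row m : ℂ)) := by
  rcases eq_or_ne m 0 with rfl | hm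
  · have hs1 : s + 1 ≠ 0 := ne_zero_of_one_lt_re (by simp; linarith)
    simp [sigma11Term_eq_inv_cpow_mul_ofReal, zero_cpow hs1]
  simp only [sigma11Term_eq_inv_cpow_mul_ofReal]
  exact (hasSum_ofReal.mpr (hasSum_sigma11Row m hm)).mul_left _

theorem hasSum_sigma11Term {s : ℂ} (hs : 1 < s.re) :
    HasSum (fun p : ℕ × ℤ => sigma11Term s p.1 p.2)
      (-(Real.pi : ℂ) ^ 2 * riemannZeta (s + 4) +
        (10 + (2 : ℂ) ^ (-s - 1)) * riemannZeta (s + 6)) := by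
  have h := (summable_sigma11Term hs).hasSum
  rwa [← (hasSum_cpow_inv_mul_sigma11Row hs).unique
    (h.prod_fiberwise (hasSum_sigma11Term_fiber hs))] at h

theorem sigma11_eval (s : ℂ) (hs : 1 < s.re) :
    (∑' x : {x : ℤ × ℤ // 1 ≤ x.1 ∧ x.2 ≠ 0 ∧ x.1 + x.2 ≠ 0 ∧ x.1 + 2 * x.2 ≠ 0},
          1 / ((x.1.1 : ℂ) ^ (s + 1) * (x.1.2 : ℂ) ^ (3 : ℕ) *
            ((x.1.1 : ℂ) + (x.1.2 : ℂ)) * ((x.1.1 : ℂ) + 2 * (x.1.2 : ℂ)))) =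
      -(Real.pi : ℂ) ^ 2 * riemannZeta (s + 4) +
        (10 + (2 : ℂ) ^ (-s - 1)) * riemannZeta (s + 6) := by
  let g (x : {x : ℤ × ℤ // 1 ≤ x.1 ∧ x.2 ≠ 0 ∧ x.1 + x.2 ≠ 0 ∧ x.1 + 2 * x.2 ≠ 0}) : ℕ × ℤ :=
    (x.1.1.toNat, x.1.2)
  have hg : Function.Injective g := by
    intro x y h
    simp only [g, Prod.mk.injEq] at h
    have := x.2.1
    have := y.2.1
    ext <;> omega
  have hzero (p : ℕ × ℤ) (hp : p ∉ Set.range g) : sigma11Term s p.1 p.2 = 0 := by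
    contrapose! hp
    obtain ⟨hm, hn, h1, h2⟩ := ne_zero_of_sigma11Term_ne_zero hs hp
    exact ⟨⟨(p.1, p.2), by omega, hn, h1, h2⟩, by simp [g]⟩
  refine (((hg.hasSum_iff hzero).mpr (hasSum_sigma11Term hs)).congr_fun fun x => ?_).tsum_eq
  have hx : ((x.1.1.toNat : ℕ) : ℂ) = x.1.1 := by
    rw [← Int.cast_natCast, Int.toNat_of_nonneg (by linarith [x.2.1])]
  simp [g, sigma11Term, hx]
end

section
/- Let {R_m} (m ∈ ℕ₀) be a sequence of complex numbers, and for each m ∈ ℕ₀ define P_m = ∑_{j=0}^{⌊m/2⌋} R_{m−2j} · (iπ)^{2j}/(2j)! and Q_m = ∑_{j=0}^{⌊m/2⌋} R_{m−2j} · (iπ)^{2j}/(2j+1)!. Then for every m ∈ ℕ₀, P_m = −2·∑_{τ=0}^{⌊m/2⌋} ζ(2τ)·Q_{m−2τ}, and for every h ∈ ℕ₀, Q_{2h} = (2/π²)·∑_{τ=0}^{h} (2^{2h−2τ+2} − 1)·ζ(2h−2τ+2)·P_{2τ}. -/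
/-!
Write `R(x) = Σ R_m x^m`. Then `Σ P_m x^m = R(x) cos(πx)` and
`Σ Q_m x^m = R(x) sin(πx)/(πx)`, so both relations are coefficient identities for products of
even power series: `πx cot(πx) = -2 Σ ζ(2τ) x^{2τ}` and
`tan(πx)/(πx) = (2/π²) Σ (2^{2τ+2} - 1) ζ(2τ+2) x^{2τ}`.
Via Euler's formula for `ζ(2τ)` in terms of Bernoulli numbers, these are the identities
`x coth x · sinh x / x = cosh x` and `cosh x · tanh x / x = sinh x / x` after `x ↦ iπx`, and
those follow formally from `B(x) (eˣ - 1) = x` for the Bernoulli generating function `B`.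
-/

open Complex Finset
open PowerSeries Nat

namespace PowerSeries

instance {R : Type*} [Semiring R] [CharZero R] : CharZero R⟦X⟧ :=
  RingHom.charZero (constantCoeff (R := R))

theorem expand_injective {R : Type*} [CommRing R] (p : ℕ) (hp : p ≠ 0) :
    Function.Injective (expand (R := R) p hp) := fun f g h =>
  ext fun m => by rw [← coeff_expand_mul p hp f, h, coeff_expand_mul]

variable {K : Type*} [Field K] [CharZero K]

local notation "𝔼" => exp K
local notation "𝔹" => bernoulliPowerSeries K

theorem exp_mul_rescale_neg_one_exp : 𝔼 * rescale (-1) 𝔼 = 1 := by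
  simpa [rescale_one] using exp_mul_exp_eq_exp_add (A := K) 1 (-1)

theorem exp_mul_exp : 𝔼 * 𝔼 = rescale 2 𝔼 := by
  simpa [rescale_one, one_add_one_eq_two] using exp_mul_exp_eq_exp_add (A := K) 1 1

theorem rescale_bernoulliPowerSeries_mul (a : K) :
    rescale a 𝔹 * (rescale a 𝔼 - 1) = C a * X := by
  simpa [rescale_X] using congrArg (rescale a) (bernoulliPowerSeries_mul_exp_sub_one K)

theorem rescale_exp_sub_one_ne_zero {a : K} (ha : a ≠ 0) : rescale a 𝔼 - 1 ≠ 0 := by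
  intro h
  simpa [coeff_rescale, coeff_exp, ha] using congrArg (coeff 1) h

theorem coeff_rescale_bernoulliPowerSeries (a : K) (n : ℕ) :
    coeff n (rescale a 𝔹) = a ^ n * bernoulli n / n ! := by
  simp [bernoulliPowerSeries, coeff_rescale, mul_div_assoc]

theorem coeff_rescale_bernoulliPowerSeries_of_odd (a : K) {n : ℕ} (hn : Odd n) :
    coeff n (rescale a 𝔹) = if n = 1 then -a / 2 else 0 := by
  rw [coeff_rescale_bernoulliPowerSeries]
  split_ifs with h
  · subst h
    rw [bernoulli_one]
    push_cast
    ring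
  · simp [bernoulli_eq_zero_of_odd hn (by grind)]

variable (K)

/- Even series written in the variable `y = x²`: under `expand 2` they become `cosh x`,
`sinh x / x`, `x coth x` and `tanh x / x`. -/

def coshSeries : K⟦X⟧ := mk fun j => ((2 * j)! : K)⁻¹

def sinhDivSeries : K⟦X⟧ := mk fun j => ((2 * j + 1)! : K)⁻¹

def cothMulSeries : K⟦X⟧ := mk fun j => 2 ^ (2 * j) * bernoulli (2 * j) / (2 * j)!

def tanhDivSeries : K⟦X⟧ :=
  mk fun j => (4 ^ (2 * j + 2) - 2 ^ (2 * j + 2)) * bernoulli (2 * j + 2) / (2 * j + 2)!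

theorem two_mul_expand_coshSeries :
    2 * expand 2 two_ne_zero (coshSeries K) = 𝔼 + rescale (-1) 𝔼 := by
  ext n
  rw [← map_ofNat C 2, coeff_C_mul, map_add, coeff_rescale, coeff_exp]
  obtain ⟨j, rfl | rfl⟩ := Nat.even_or_odd' n
  · rw [coeff_expand_mul, coshSeries, coeff_mk, pow_mul]
    norm_num
    ring
  · rw [coeff_expand_of_not_dvd _ _ _ (by omega), (odd_two_mul_add_one j).neg_one_pow]
    simp

theorem two_X_mul_expand_sinhDivSeries :
    2 * X * expand 2 two_ne_zero (sinhDivSeries K) = 𝔼 - rescale (-1) 𝔼 := by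
  ext n
  rw [map_sub, coeff_rescale, coeff_exp]
  rcases n with _ | n
  · simp
  rw [mul_assoc, ← map_ofNat C 2, coeff_C_mul, coeff_succ_X_mul]
  obtain ⟨j, rfl | rfl⟩ := Nat.even_or_odd' n
  · rw [coeff_expand_mul, sinhDivSeries, coeff_mk, pow_succ, pow_mul]
    norm_num
    ring
  · rw [coeff_expand_of_not_dvd _ _ _ (by omega), show 2 * j + 1 + 1 = 2 * (j + 1) by ring,
      pow_mul]
    simp

theorem expand_cothMulSeries : expand 2 two_ne_zero (cothMulSeries K) = rescale 2 𝔹 + X := by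
  ext n
  rw [map_add, coeff_X]
  obtain ⟨j, rfl | rfl⟩ := Nat.even_or_odd' n
  · rw [coeff_expand_mul, cothMulSeries, coeff_mk, coeff_rescale_bernoulliPowerSeries,
      if_neg (by omega), add_zero]
  · rw [coeff_expand_of_not_dvd _ _ _ (by omega),
      coeff_rescale_bernoulliPowerSeries_of_odd _ (odd_two_mul_add_one j)]
    split_ifs <;> simp

theorem expand_X_mul_tanhDivSeries :
    expand 2 two_ne_zero (X * tanhDivSeries K) = rescale 4 𝔹 - rescale 2 𝔹 + X := by
  ext n
  rw [map_add, map_sub, coeff_X]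
  obtain ⟨j, rfl | rfl⟩ := Nat.even_or_odd' n
  · rw [coeff_expand_mul, coeff_rescale_bernoulliPowerSeries, coeff_rescale_bernoulliPowerSeries,
      if_neg (by omega)]
    rcases j with _ | j
    · simp
    · rw [coeff_succ_X_mul, tanhDivSeries, coeff_mk]
      ring_nf
  · rw [coeff_expand_of_not_dvd _ _ _ (by omega),
      coeff_rescale_bernoulliPowerSeries_of_odd _ (odd_two_mul_add_one j),
      coeff_rescale_bernoulliPowerSeries_of_odd _ (odd_two_mul_add_one j)]
    split_ifs <;> norm_num

theorem cothMulSeries_mul_sinhDivSeries : cothMulSeries K * sinhDivSeries K = coshSeries K := by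
  apply expand_injective 2 two_ne_zero
  apply mul_left_cancel₀ (mul_ne_zero two_ne_zero X_ne_zero)
  have hB := rescale_bernoulliPowerSeries_mul (2 : K)
  rw [map_ofNat] at hB
  have hE := exp_mul_rescale_neg_one_exp (K := K)
  have hE2 := exp_mul_exp (K := K)
  have hc := two_mul_expand_coshSeries K
  have hs := two_X_mul_expand_sinhDivSeries K
  rw [map_mul, expand_cothMulSeries]
  linear_combination (rescale 2 𝔹 + X) * hs - X * hc + rescale (-1) 𝔼 * hB
    - rescale 2 𝔹 * 𝔼 * hE + rescale 2 𝔹 * rescale (-1) 𝔼 * hE2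

theorem coshSeries_mul_tanhDivSeries : coshSeries K * tanhDivSeries K = sinhDivSeries K := by
  apply mul_left_cancel₀ (X_ne_zero (R := K))
  apply expand_injective 2 two_ne_zero
  apply mul_left_cancel₀ (two_ne_zero : (2 : K⟦X⟧) ≠ 0)
  rw [mul_left_comm, map_mul, expand_X_mul_tanhDivSeries, map_mul, expand_X]
  have hB2 := rescale_bernoulliPowerSeries_mul (2 : K)
  have hB4 := rescale_bernoulliPowerSeries_mul (4 : K)
  rw [map_ofNat] at hB2 hB4
  have hE := exp_mul_rescale_neg_one_exp (K := K)
  have hE2 := exp_mul_exp (K := K)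
  have hc := two_mul_expand_coshSeries K
  have hs := two_X_mul_expand_sinhDivSeries K
  have h4 : rescale 2 𝔼 * rescale 2 𝔼 = rescale 4 𝔼 := by
    rw [exp_mul_exp_eq_exp_add]; norm_num
  have key : (rescale 2 𝔼 + 1) * (rescale 4 𝔹 - rescale 2 𝔹) = -(2 * X) := by
    apply mul_right_cancel₀ (rescale_exp_sub_one_ne_zero (two_ne_zero : (2 : K) ≠ 0))
    linear_combination hB4 - (rescale 2 𝔼 + 1) * hB2 + rescale 4 𝔹 * h4
  linear_combination (rescale 4 𝔹 - rescale 2 𝔹 + X) * hc - X * hs + rescale (-1) 𝔼 * key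
    - (rescale 4 𝔹 - rescale 2 𝔹) * (𝔼 * hE - rescale (-1) 𝔼 * hE2)

end PowerSeries

open PowerSeries Real

noncomputable section

theorem sum_range_half_eq_coeff_mul {S : Type*} [CommSemiring S] (f g : ℕ → S) {n e : ℕ}
    (he : e < 2) : ∑ j ∈ range ((2 * n + e) / 2 + 1), f (2 * n + e - 2 * j) * g j
      = coeff n (mk g * mk fun i => f (2 * i + e)) := by
  rw [coeff_mul, Nat.sum_antidiagonal_eq_sum_range_succ (fun a b => coeff a (mk g) * coeff b _),
    show (2 * n + e) / 2 = n by omega]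
  refine sum_congr rfl fun j hj => ?_
  rw [coeff_mk, coeff_mk, mul_comm, show 2 * (n - j) + e = 2 * n + e - 2 * j by
    have := mem_range.mp hj; omega]

def cosPiSeries : ℂ⟦X⟧ := mk fun j => (I * π) ^ (2 * j) / (2 * j)!

def sincPiSeries : ℂ⟦X⟧ := mk fun j => (I * π) ^ (2 * j) / (2 * j + 1)!

def cotPiSeries : ℂ⟦X⟧ := mk fun τ => -2 * riemannZeta (2 * τ)

def tanPiSeries : ℂ⟦X⟧ :=
  mk fun τ => 2 / π ^ 2 * ((2 ^ (2 * τ + 2) - 1) * riemannZeta (2 * τ + 2))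

theorem I_mul_pi_pow_two_mul (j : ℕ) : (I * π) ^ (2 * j) = (-(π : ℂ) ^ 2) ^ j := by
  rw [pow_mul, mul_pow, I_sq, neg_one_mul]

theorem rescale_coshSeries : rescale (-(π : ℂ) ^ 2) (coshSeries ℂ) = cosPiSeries := by
  ext j
  rw [coeff_rescale, coshSeries, cosPiSeries, coeff_mk, coeff_mk, I_mul_pi_pow_two_mul,
    div_eq_mul_inv]

theorem rescale_sinhDivSeries : rescale (-(π : ℂ) ^ 2) (sinhDivSeries ℂ) = sincPiSeries := by
  ext j
  rw [coeff_rescale, sinhDivSeries, sincPiSeries, coeff_mk, coeff_mk, I_mul_pi_pow_two_mul,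
    div_eq_mul_inv]

theorem rescale_cothMulSeries : rescale (-(π : ℂ) ^ 2) (cothMulSeries ℂ) = cotPiSeries := by
  ext τ
  rw [coeff_rescale, cothMulSeries, cotPiSeries, coeff_mk, coeff_mk, riemannZeta_two_mul_nat',
    zpow_sub_one₀ two_ne_zero,
    show (2 * τ : ℤ) = ((2 * τ : ℕ) : ℤ) by push_cast; ring, zpow_natCast, neg_pow, pow_mul]
  field_simp
  ring

theorem riemannZeta_two_mul_add_two (τ : ℕ) :
    riemannZeta (2 * τ + 2) = (-1) ^ τ * 2 ^ (2 * τ + 1) * π ^ (2 * τ + 2)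
      * bernoulli (2 * τ + 2) / (2 * τ + 2)! := by
  have h := riemannZeta_two_mul_nat (k := τ + 1) (by omega)
  rw [show 2 * (τ + 1) - 1 = 2 * τ + 1 by omega, show 2 * (τ + 1) = 2 * τ + 2 by ring,
    pow_succ, pow_succ] at h
  push_cast at h
  rw [show (2 * τ + 2 : ℂ) = 2 * (τ + 1) by ring, h]
  ring_nf

theorem rescale_tanhDivSeries : rescale (-(π : ℂ) ^ 2) (tanhDivSeries ℂ) = tanPiSeries := by
  ext τ
  have hπ : (π : ℂ) ≠ 0 := ofReal_ne_zero.mpr pi_ne_zero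
  rw [coeff_rescale, tanhDivSeries, tanPiSeries, coeff_mk, coeff_mk, riemannZeta_two_mul_add_two,
    show (4 : ℂ) ^ (2 * τ + 2) = (2 ^ (2 * τ + 2)) ^ 2 by rw [← pow_mul, pow_mul']; norm_num,
    neg_pow]
  field_simp
  ring

theorem cotPiSeries_mul_sincPiSeries : cotPiSeries * sincPiSeries = cosPiSeries := by
  rw [← rescale_cothMulSeries, ← rescale_sinhDivSeries, ← rescale_coshSeries, ← map_mul,
    cothMulSeries_mul_sinhDivSeries]

theorem cosPiSeries_mul_tanPiSeries : cosPiSeries * tanPiSeries = sincPiSeries := by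
  rw [← rescale_coshSeries, ← rescale_tanhDivSeries, ← rescale_sinhDivSeries, ← map_mul,
    coshSeries_mul_tanhDivSeries]

theorem coeff_cotPiSeries_mul (q : ℕ → ℂ) {n e : ℕ} (he : e < 2) :
    coeff n (cotPiSeries * mk fun i => q (2 * i + e))
      = -2 * ∑ τ ∈ range ((2 * n + e) / 2 + 1),
          riemannZeta (2 * τ) * q (2 * n + e - 2 * τ) := by
  rw [cotPiSeries, ← sum_range_half_eq_coeff_mul _ _ he, mul_sum]
  exact sum_congr rfl fun _ _ => by ring

theorem coeff_mul_tanPiSeries (p : ℕ → ℂ) (h : ℕ) :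
    coeff h (mk p * tanPiSeries) = 2 / π ^ 2 * ∑ τ ∈ range (h + 1),
      ((2 : ℂ) ^ (2 * h - 2 * τ + 2) - 1) * riemannZeta (2 * h - 2 * τ + 2) * p τ := by
  rw [coeff_mul, Nat.sum_antidiagonal_eq_sum_range_succ (fun a b => coeff a _ * coeff b _),
    mul_sum]
  refine sum_congr rfl fun τ hτ => ?_
  have hτh : τ ≤ h := Nat.lt_succ_iff.mp (mem_range.mp hτ)
  rw [tanPiSeries, coeff_mk, coeff_mk, show 2 * (h - τ) + 2 = 2 * h - 2 * τ + 2 by omega,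
    Nat.cast_sub hτh, mul_sub]
  ring

end

theorem PQ_relations (R P Q : ℕ → ℂ)
    (hP : ∀ m : ℕ, P m = ∑ j ∈ Finset.range (m / 2 + 1),
      R (m - 2 * j) * (Complex.I * (Real.pi : ℂ)) ^ (2 * j) / (Nat.factorial (2 * j)))
    (hQ : ∀ m : ℕ, Q m = ∑ j ∈ Finset.range (m / 2 + 1),
      R (m - 2 * j) * (Complex.I * (Real.pi : ℂ)) ^ (2 * j) / (Nat.factorial (2 * j + 1))) :
    (∀ m : ℕ, P m = -2 * ∑ τ ∈ Finset.range (m / 2 + 1),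
        riemannZeta (2 * τ) * Q (m - 2 * τ)) ∧
      ∀ h : ℕ, Q (2 * h) = (2 / (Real.pi : ℂ) ^ 2) * ∑ τ ∈ Finset.range (h + 1),
        ((2 : ℂ) ^ (2 * h - 2 * τ + 2) - 1) * riemannZeta (2 * h - 2 * τ + 2) * P (2 * τ) := by
  have hP_mk (e : ℕ) (he : e < 2) :
      mk (fun i => P (2 * i + e)) = cosPiSeries * mk fun i => R (2 * i + e) := by
    ext i
    rw [coeff_mk, hP, cosPiSeries, ← sum_range_half_eq_coeff_mul _ _ he]
    simp only [mul_div_assoc]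
  have hQ_mk (e : ℕ) (he : e < 2) :
      mk (fun i => Q (2 * i + e)) = sincPiSeries * mk fun i => R (2 * i + e) := by
    ext i
    rw [coeff_mk, hQ, sincPiSeries, ← sum_range_half_eq_coeff_mul _ _ he]
    simp only [mul_div_assoc]
  refine ⟨fun m => ?_, fun h => ?_⟩
  · obtain ⟨n, e, he, rfl⟩ : ∃ n e, e < 2 ∧ m = 2 * n + e :=
      ⟨m / 2, m % 2, Nat.mod_lt _ two_pos, (Nat.div_add_mod m 2).symm⟩
    calc P (2 * n + e) = coeff n (mk fun i => P (2 * i + e)) := by rw [coeff_mk]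
      _ = coeff n (cotPiSeries * mk fun i => Q (2 * i + e)) := by
        rw [hP_mk e he, hQ_mk e he, ← mul_assoc, cotPiSeries_mul_sincPiSeries]
      _ = _ := coeff_cotPiSeries_mul Q he
  · calc Q (2 * h) = coeff h (mk fun i => Q (2 * i + 0)) := by rw [coeff_mk, add_zero]
      _ = coeff h ((mk fun i => P (2 * i + 0)) * tanPiSeries) := by
        rw [hQ_mk 0 two_pos, hP_mk 0 two_pos, ← cosPiSeries_mul_tanPiSeries, mul_right_comm]
      _ = _ := by simp only [coeff_mul_tanPiSeries, add_zero]
end
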